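/- arXiv:2604.20394 — 3 statements merged into one kernel-verified Lean document; each statement's English description precedes it below -/
import Mathlib

section
/- For any two splits 0 ≤ j < j' ≤ N, letting ℓ = #{i : j < x_i ≤ j'} be the number of data points with feature value in (j, j'], we have |L_Gini(j) − L_Gini(j')| ≤ 2ℓ/m. -/
/-!
Write `G(a, b) = 2ab/(a+b)`. Moving the split from `j` to `j'` transfers the `p` positive and `q`
negative points with feature in `(j, j']` from the right child to the left one. `G` is
nondecreasing in each argument, with partial derivatives `2b²/(a+b)² ≤ 2`, so the left child's
term grows and the right child's term shrinks, each by at most `2(p+q) ≤ 2ℓ`; as the two changes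
have opposite signs, the loss changes by at most `2ℓ/m`.
-/

open Finset

/-- Gini loss of a split `j ∈ {0,…,N}` for a dataset with labels in `{-1,+1}`;
a child with no points contributes `0`. -/
noncomputable def giniLoss (m N : ℕ) (x : Fin m → ℕ) (y : Fin m → ℝ) (j : ℕ) : ℝ :=
  let a := ((Finset.univ.filter fun i => x i ∈ Finset.Icc 1 j ∧ y i = 1).card : ℝ)
  let b := ((Finset.univ.filter fun i => x i ∈ Finset.Icc 1 j ∧ y i = -1).card : ℝ)
  let c := ((Finset.univ.filter fun i => x i ∈ Finset.Icc (j + 1) N ∧ y i = 1).card : ℝ)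
  let d := ((Finset.univ.filter fun i => x i ∈ Finset.Icc (j + 1) N ∧ y i = -1).card : ℝ)
  (1 / m : ℝ) * ((if a + b = 0 then 0 else 2 * a * b / (a + b)) +
                 (if c + d = 0 then 0 else 2 * c * d / (c + d)))

/-- Division by zero makes this `0` on an empty node, matching the convention of `giniLoss`. -/
noncomputable def weightedGini (a b : ℝ) : ℝ := 2 * a * b / (a + b)

theorem weightedGini_comm (a b : ℝ) : weightedGini a b = weightedGini b a := by
  unfold weightedGini; ring

theorem weightedGini_zero_right (a : ℝ) : weightedGini a 0 = 0 := by
  simp [weightedGini]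

theorem weightedGini_le_add_left {a b p : ℝ} (ha : 0 ≤ a) (hb : 0 ≤ b) (hp : 0 ≤ p) :
    weightedGini a b ≤ weightedGini (a + p) b := by
  rcases hb.eq_or_lt with rfl | hb
  · simp only [weightedGini_zero_right, le_refl]
  unfold weightedGini
  rw [div_le_div_iff₀ (by positivity) (by positivity)]
  nlinarith [mul_nonneg hp (mul_nonneg hb.le hb.le)]

theorem weightedGini_add_left_le {a b p : ℝ} (ha : 0 ≤ a) (hb : 0 ≤ b) (hp : 0 ≤ p) :
    weightedGini (a + p) b ≤ weightedGini a b + 2 * p := by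
  rcases hb.eq_or_lt with rfl | hb
  · simp only [weightedGini_zero_right, zero_add]; linarith
  unfold weightedGini
  rw [div_add' _ _ _ (by positivity), div_le_div_iff₀ (by positivity) (by positivity)]
  nlinarith [mul_nonneg hp (mul_nonneg ha ha), mul_nonneg hp (mul_nonneg ha hb.le),
    mul_nonneg (mul_nonneg hp hp) ha, mul_nonneg (mul_nonneg hp hp) hb.le]

theorem weightedGini_le_add {a b p q : ℝ} (ha : 0 ≤ a) (hb : 0 ≤ b) (hp : 0 ≤ p) (hq : 0 ≤ q) :
    weightedGini a b ≤ weightedGini (a + p) (b + q) :=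
  calc weightedGini a b ≤ weightedGini (a + p) b := weightedGini_le_add_left ha hb hp
    _ = weightedGini b (a + p) := weightedGini_comm _ _
    _ ≤ weightedGini (b + q) (a + p) := weightedGini_le_add_left hb (by positivity) hq
    _ = weightedGini (a + p) (b + q) := weightedGini_comm _ _

theorem weightedGini_add_le {a b p q : ℝ} (ha : 0 ≤ a) (hb : 0 ≤ b) (hp : 0 ≤ p) (hq : 0 ≤ q) :
    weightedGini (a + p) (b + q) ≤ weightedGini a b + 2 * (p + q) :=
  calc weightedGini (a + p) (b + q) = weightedGini (b + q) (a + p) := weightedGini_comm _ _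
    _ ≤ weightedGini b (a + p) + 2 * q := weightedGini_add_left_le hb (by positivity) hq
    _ = weightedGini (a + p) b + 2 * q := by rw [weightedGini_comm]
    _ ≤ weightedGini a b + 2 * p + 2 * q := by
      gcongr; exact weightedGini_add_left_le ha hb hp
    _ = weightedGini a b + 2 * (p + q) := by ring

theorem abs_weightedGini_transfer_le {a b c d p q : ℝ} (ha : 0 ≤ a) (hb : 0 ≤ b) (hc : 0 ≤ c)
    (hd : 0 ≤ d) (hp : 0 ≤ p) (hq : 0 ≤ q) :
    |(weightedGini a b + weightedGini (c + p) (d + q)) -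
        (weightedGini (a + p) (b + q) + weightedGini c d)| ≤ 2 * (p + q) := by
  have := weightedGini_le_add ha hb hp hq
  have := weightedGini_le_add hc hd hp hq
  have := weightedGini_add_le ha hb hp hq
  have := weightedGini_add_le hc hd hp hq
  rw [abs_le]; constructor <;> linarith

section labelCount

variable {ι α β : Type*} [Fintype ι] [DecidableEq α] [DecidableEq β]

def labelCount (x : ι → α) (y : ι → β) (s : Finset α) (l : β) : ℕ :=
  #{i | x i ∈ s ∧ y i = l}

theorem labelCount_union (x : ι → α) (y : ι → β) {s t : Finset α} (hst : Disjoint s t) (l : β) :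
    labelCount x y (s ∪ t) l = labelCount x y s l + labelCount x y t l := by
  classical
  rw [labelCount, labelCount, labelCount, ← card_union_of_disjoint]
  · congr 1; ext i; simp [or_and_right]
  · exact disjoint_filter.2 fun i _ hs ht => disjoint_left.1 hst hs.1 ht.1

theorem labelCount_add_labelCount_le (x : ι → α) (y : ι → β) (s : Finset α) {l l' : β}
    (hl : l ≠ l') : labelCount x y s l + labelCount x y s l' ≤ #{i | x i ∈ s} := by
  classical
  rw [labelCount, labelCount, ← card_union_of_disjoint]
  · refine card_le_card fun i => ?_
    simp only [mem_union, mem_filter]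
    tauto
  · exact disjoint_filter.2 fun i _ h h' => hl (h.2.symm.trans h'.2)

end labelCount

theorem giniLoss_eq (m N : ℕ) (x : Fin m → ℕ) (y : Fin m → ℝ) (j : ℕ) :
    giniLoss m N x y j = 1 / m *
      (weightedGini (labelCount x y (Icc 1 j) 1) (labelCount x y (Icc 1 j) (-1)) +
        weightedGini (labelCount x y (Icc (j + 1) N) 1) (labelCount x y (Icc (j + 1) N) (-1))) := by
  have hite (a b : ℝ) : (if a + b = 0 then 0 else 2 * a * b / (a + b)) = weightedGini a b := by
    split_ifs with h <;> simp [weightedGini, h]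
  simp only [giniLoss, hite]
  rfl

theorem gini_split_shift_general (m N : ℕ) (x : Fin m → ℕ) (y : Fin m → ℝ)
    (j j' : ℕ) (hjj' : j < j') (hj'N : j' ≤ N) :
    |giniLoss m N x y j - giniLoss m N x y j'| ≤
      2 * ((Finset.univ.filter fun i => j < x i ∧ x i ≤ j').card : ℝ) / m := by
  have hleft : Icc 1 j' = Icc 1 j ∪ Ioc j j' := by ext; simp; omega
  have hright : Icc (j + 1) N = Icc (j' + 1) N ∪ Ioc j j' := by ext; simp; omega
  have hdisj_left : Disjoint (Icc 1 j) (Ioc j j') := by simp [disjoint_left]; omega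
  have hdisj_right : Disjoint (Icc (j' + 1) N) (Ioc j j') := by simp [disjoint_left]; omega
  have hℓ := labelCount_add_labelCount_le x y (Ioc j j') (by norm_num : (1 : ℝ) ≠ -1)
  simp only [mem_Ioc] at hℓ
  rw [giniLoss_eq, giniLoss_eq, ← mul_sub, abs_mul, abs_of_nonneg (by positivity),
    one_div_mul_eq_div]
  gcongr
  simp only [hleft, hright, labelCount_union _ _ hdisj_left, labelCount_union _ _ hdisj_right,
    Nat.cast_add]
  calc _ ≤ 2 * ((labelCount x y (Ioc j j') 1 : ℝ) + labelCount x y (Ioc j j') (-1)) :=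
        abs_weightedGini_transfer_le (Nat.cast_nonneg _) (Nat.cast_nonneg _) (Nat.cast_nonneg _)
          (Nat.cast_nonneg _) (Nat.cast_nonneg _) (Nat.cast_nonneg _)
    _ ≤ _ := by gcongr; exact_mod_cast hℓ

/-- Lipschitz property of the Gini loss: if `ℓ` data points have feature value in
`(j, j']`, then `|L_Gini(j) − L_Gini(j')| ≤ 2ℓ/m`. -/
theorem gini_split_shift (m N : ℕ) (hm : 1 ≤ m) (x : Fin m → ℕ) (y : Fin m → ℝ)
    (hx : ∀ i, x i ∈ Finset.Icc 1 N) (hy : ∀ i, y i = 1 ∨ y i = -1)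
    (j j' : ℕ) (hjj' : j < j') (hj'N : j' ≤ N) :
    |giniLoss m N x y j - giniLoss m N x y j'| ≤
      2 * ((Finset.univ.filter fun i => j < x i ∧ x i ≤ j').card : ℝ) / m :=
  gini_split_shift_general m N x y j j' hjj' hj'N
end

section
/- Let M > 0, β > 0, m ≥ 1 be reals, and let n ≥ 1, s, q be reals with 0 ≤ s ≤ M·n and q ≥ 0. Let a, b, c be reals with 0 ≤ a ≤ βm, 0 ≤ b ≤ βMm, 0 ≤ c ≤ βM²m, and set D = n + a + βm. Then |(q + c − (s + b)²/D) − (q − s²/n)| ≤ 3βM²m. (In words: the estimated sum of squared errors computed from Count–Min overestimates of the count, first moment, and second moment of a range, with the denominator shifted by βm, differs from the true sum of squared errors by at most 3βM²m.) -/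
/-! Write the error as `c - ((s + b)²/D - s²/n)` with `D = n + a + βm ≥ n`. Raising the
denominator from `n` to `D` lowers `s²/n` by at most `M²(D - n) ≤ 2βM²m`, since `s ≤ Mn`;
raising the numerator from `s²` to `(s + b)²` adds `b(2s + b) ≤ 3MbD`. Together with
`0 ≤ c ≤ βM²m` and `b ≤ βMm` this bounds the error by `3βM²m` on either side. -/

noncomputable def sse (n s q : ℝ) : ℝ := q - s ^ 2 / n

lemma sse_add_sub_sse (D n s s' q c : ℝ) :
    sse D s' (q + c) - sse n s q = c - (s' ^ 2 / D - s ^ 2 / n) := by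
  unfold sse; ring

lemma sq_div_sub_sq_div_le {M n D s : ℝ} (hn : 0 < n) (hnD : n ≤ D)
    (hs0 : 0 ≤ s) (hsM : s ≤ M * n) :
    s ^ 2 / n - s ^ 2 / D ≤ M ^ 2 * (D - n) := by
  have hD : 0 < D := hn.trans_le hnD
  have hs2 : s ^ 2 ≤ (M * n) ^ 2 := pow_le_pow_left₀ hs0 hsM 2
  calc s ^ 2 / n - s ^ 2 / D = s ^ 2 * (D - n) / (n * D) := by field_simp
    _ ≤ (M * n) ^ 2 * (D - n) / (n * D) := by gcongr
    _ = M ^ 2 * (D - n) * (n / D) := by field_simp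
    _ ≤ M ^ 2 * (D - n) :=
        mul_le_of_le_one_right (by have := sub_nonneg.2 hnD; positivity)
          (div_le_one_of_le₀ hnD hD.le)

lemma add_sq_div_sub_sq_div_le {M n D s b : ℝ} (hn : 0 < n) (hnD : n ≤ D)
    (hb0 : 0 ≤ b) (hsM : s ≤ M * D) (hbM : b ≤ M * D) :
    (s + b) ^ 2 / D - s ^ 2 / n ≤ 3 * M * b := by
  have hD : 0 < D := hn.trans_le hnD
  calc (s + b) ^ 2 / D - s ^ 2 / n ≤ (s + b) ^ 2 / D - s ^ 2 / D :=
        sub_le_sub_left (div_le_div_of_nonneg_left (sq_nonneg s) hn hnD) _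
    _ = b * (2 * s + b) / D := by ring
    _ ≤ b * (3 * (M * D)) / D := by gcongr; linarith
    _ = 3 * M * b := by field_simp

lemma abs_sse_sub_sse_le {M t n s q a b c : ℝ} (hn : 0 < n)
    (hs0 : 0 ≤ s) (hsM : s ≤ M * n) (ha0 : 0 ≤ a) (ha : a ≤ t)
    (hb0 : 0 ≤ b) (hb : b ≤ t * M) (hc0 : 0 ≤ c) (hc : c ≤ t * M ^ 2) :
    |sse (n + a + t) (s + b) (q + c) - sse n s q| ≤ 3 * t * M ^ 2 := by
  have hM : 0 ≤ M := nonneg_of_mul_nonneg_left (hs0.trans hsM) hn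
  have hnD : n ≤ n + a + t := by linarith
  have hsD : s ≤ M * (n + a + t) := hsM.trans (by gcongr)
  have hbD : b ≤ M * (n + a + t) := hb.trans (by rw [mul_comm]; gcongr; linarith)
  have hdenom := sq_div_sub_sq_div_le hn hnD hs0 hsM
  have hnum := add_sq_div_sub_sq_div_le hn hnD hb0 hsD hbD
  have hsb : s ^ 2 / (n + a + t) ≤ (s + b) ^ 2 / (n + a + t) := by
    gcongr <;> linarith
  have hMb : M * b ≤ t * M ^ 2 := (mul_le_mul_of_nonneg_left hb hM).trans_eq (by ring)
  have hMa : M ^ 2 * a ≤ M ^ 2 * t := by gcongr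
  rw [sse_add_sub_sse, abs_le]
  constructor <;> linarith

theorem sse_estimate_error_general (M β m n s q a b c : ℝ)
    (hn : 1 ≤ n) (hs0 : 0 ≤ s) (hsM : s ≤ M * n)
    (ha0 : 0 ≤ a) (ha : a ≤ β * m)
    (hb0 : 0 ≤ b) (hb : b ≤ β * M * m)
    (hc0 : 0 ≤ c) (hc : c ≤ β * M ^ 2 * m) :
    |(q + c - (s + b) ^ 2 / (n + a + β * m)) - (q - s ^ 2 / n)| ≤ 3 * β * M ^ 2 * m :=
  (abs_sse_sub_sse_le (t := β * m) (q := q) (by linarith) hs0 hsM ha0 ha hb0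
    (hb.trans_eq (by ring)) hc0 (hc.trans_eq (by ring))).trans_eq (by ring)

/-- The estimated SSE computed from Count–Min overestimates `n+a, s+b, q+c` of the count,
first moment, and second moment (denominator shifted by `βm`) differs from the true SSE
`q − s²/n` by at most `3βM²m`. -/
theorem sse_estimate_error (M β m n s q a b c : ℝ)
    (hM : 0 < M) (hβ : 0 < β) (hm : 1 ≤ m)
    (hn : 1 ≤ n) (hs0 : 0 ≤ s) (hsM : s ≤ M * n) (hq : 0 ≤ q)
    (ha0 : 0 ≤ a) (ha : a ≤ β * m)
    (hb0 : 0 ≤ b) (hb : b ≤ β * M * m)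
    (hc0 : 0 ≤ c) (hc : c ≤ β * M ^ 2 * m) :
    |(q + c - (s + b) ^ 2 / (n + a + β * m)) - (q - s ^ 2 / n)| ≤ 3 * β * M ^ 2 * m :=
  sse_estimate_error_general M β m n s q a b c hn hs0 hsM ha0 ha hb0 hb hc0 hc
end

section
/- In the classification lower-bound construction, for each split j ∈ {2i−1, 2i}: L_mis(j) ≤ 1/9; moreover the majority label on the left side is −1 and the majority label on the right side is +1, i.e. f_{−1,{1,...,j}} > f_{+1,{1,...,j}} and f_{+1,{j+1,...,N}} > f_{−1,{j+1,...,N}}. Consequently min_{0 ≤ j ≤ N} L_mis(j) = min{L_mis(2i−1), L_mis(2i)}. -/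
open Finset Classical

/-- Number of data points with feature value in the range `R` and label `v`. -/
noncomputable def fcount (data : Multiset (ℕ × ℝ)) (v : ℝ) (R : Finset ℕ) : ℕ :=
  Multiset.card (data.filter fun p => p.1 ∈ R ∧ p.2 = v)

/-- Misclassification loss of split `j ∈ {0,…,N}`. -/
noncomputable def Lmis (N : ℕ) (data : Multiset (ℕ × ℝ)) (j : ℕ) : ℝ :=
  (1 / (Multiset.card data : ℝ)) *
    (((min (fcount data (-1) (Finset.Icc 1 j)) (fcount data 1 (Finset.Icc 1 j)) : ℕ) : ℝ) +
     ((min (fcount data (-1) (Finset.Icc (j + 1) N))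
         (fcount data 1 (Finset.Icc (j + 1) N)) : ℕ) : ℝ))

/-- The classification lower-bound dataset: for each `k ∈ {1,…,n}`, `B = n` copies of
`(2k, s_k)` with `s_k = +1` if `z_k = 1` and `s_k = −1` if `z_k = 0`; `T = 4n²` copies of
`(2i−1, −1)`; and `T` copies of `(2i+1, +1)`. -/
noncomputable def classData (n i : ℕ) (z : ℕ → ℕ) : Multiset (ℕ × ℝ) :=
  (∑ k ∈ Finset.Icc 1 n, Multiset.replicate n (2 * k, if z k = 1 then (1 : ℝ) else -1))
  + Multiset.replicate (4 * n ^ 2) (2 * i - 1, (-1 : ℝ))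
  + Multiset.replicate (4 * n ^ 2) (2 * i + 1, (1 : ℝ))

/-!
Splits `2i − 1` and `2i` separate the two heavy blocks of `T = 4n²` points, leaving the `−1`
block on the left and the `+1` block on the right; only the `n²` bit-encoding points can then
be misclassified, so the loss is at most `n² / 9n² = 1/9` and both majorities are forced.
Every other split puts both heavy blocks on one side, whose minority alone has `4n²` points,
so its loss is at least `4/9`.
-/

section fcount

variable {d d' : Multiset (ℕ × ℝ)} {v v' y : ℝ} {R R' : Finset ℕ} {x m : ℕ}

lemma fcount_add : fcount (d + d') v R = fcount d v R + fcount d' v R := by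
  simp only [fcount, Multiset.filter_add, Multiset.card_add]

lemma fcount_replicate_of_mem (h : x ∈ R) : fcount (Multiset.replicate m (x, v)) v R = m := by
  rw [fcount, Multiset.filter_eq_self.mpr, Multiset.card_replicate]
  intro p hp
  rw [Multiset.eq_of_mem_replicate hp]
  exact ⟨h, rfl⟩

lemma fcount_replicate_eq_zero (h : x ∉ R ∨ y ≠ v) :
    fcount (Multiset.replicate m (x, y)) v R = 0 := by
  rw [fcount, Multiset.card_eq_zero, Multiset.filter_eq_nil]
  intro p hp
  rw [Multiset.eq_of_mem_replicate hp]
  tauto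

lemma fcount_add_fcount_le_card (hR : Disjoint R R') :
    fcount d v R + fcount d v' R' ≤ Multiset.card d := by
  have hdisj : Multiset.filter (fun p => (p.1 ∈ R ∧ p.2 = v) ∧ p.1 ∈ R' ∧ p.2 = v') d = 0 :=
    Multiset.filter_eq_nil.mpr fun p _ h => disjoint_left.mp hR h.1.1 h.2.1
  rw [fcount, fcount, ← Multiset.card_add, Multiset.filter_add_filter, hdisj, add_zero]
  exact Multiset.card_le_card (Multiset.filter_le _ _)

lemma Lmis_eq_div (N : ℕ) (d : Multiset (ℕ × ℝ)) (j : ℕ) :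
    Lmis N d j = ((min (fcount d (-1) (Icc 1 j)) (fcount d 1 (Icc 1 j)) +
      min (fcount d (-1) (Icc (j + 1) N)) (fcount d 1 (Icc (j + 1) N)) : ℕ) : ℝ) /
        Multiset.card d := by
  rw [Lmis, Nat.cast_add, one_div_mul_eq_div]

end fcount

noncomputable def bitPoints (n : ℕ) (z : ℕ → ℕ) : Multiset (ℕ × ℝ) :=
  ∑ k ∈ Icc 1 n, Multiset.replicate n (2 * k, if z k = 1 then (1 : ℝ) else -1)

section classData

variable {n i : ℕ} {z : ℕ → ℕ} {v : ℝ} {R : Finset ℕ}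

lemma card_bitPoints : Multiset.card (bitPoints n z) = n * n := by
  simp [bitPoints]

lemma card_classData : Multiset.card (classData n i z) = 9 * n ^ 2 := by
  simp only [classData, Multiset.card_add, Multiset.card_sum, Multiset.card_replicate,
    sum_const, Nat.card_Icc, Nat.add_sub_cancel, smul_eq_mul]
  ring

lemma fcount_classData : fcount (classData n i z) v R = fcount (bitPoints n z) v R +
    fcount (Multiset.replicate (4 * n ^ 2) (2 * i - 1, (-1 : ℝ))) v R +
    fcount (Multiset.replicate (4 * n ^ 2) (2 * i + 1, (1 : ℝ))) v R := by
  rw [classData, fcount_add, fcount_add, bitPoints]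

lemma le_fcount_classData_neg (h : 2 * i - 1 ∈ R) : 4 * n ^ 2 ≤ fcount (classData n i z) (-1) R := by
  rw [fcount_classData, fcount_replicate_of_mem h]
  omega

lemma le_fcount_classData_pos (h : 2 * i + 1 ∈ R) : 4 * n ^ 2 ≤ fcount (classData n i z) 1 R := by
  rw [fcount_classData, fcount_replicate_of_mem h]
  omega

lemma fcount_classData_pos_of_not_mem (h : 2 * i + 1 ∉ R) :
    fcount (classData n i z) 1 R = fcount (bitPoints n z) 1 R := by
  rw [fcount_classData, fcount_replicate_eq_zero (.inr (by norm_num)),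
    fcount_replicate_eq_zero (.inl h), add_zero, add_zero]

lemma fcount_classData_neg_of_not_mem (h : 2 * i - 1 ∉ R) :
    fcount (classData n i z) (-1) R = fcount (bitPoints n z) (-1) R := by
  rw [fcount_classData, fcount_replicate_eq_zero (.inl h),
    fcount_replicate_eq_zero (.inr (by norm_num)), add_zero, add_zero]

variable {j : ℕ}

lemma fcount_classData_misclassified_le (hj₁ : 2 * i - 1 ≤ j) (hj₂ : j ≤ 2 * i) :
    fcount (classData n i z) 1 (Icc 1 j) +
      fcount (classData n i z) (-1) (Icc (j + 1) (2 * n + 1)) ≤ n * n := by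
  rw [fcount_classData_pos_of_not_mem (by simp only [mem_Icc]; omega),
    fcount_classData_neg_of_not_mem (by simp only [mem_Icc]; omega), ← card_bitPoints]
  exact fcount_add_fcount_le_card
    (disjoint_left.mpr fun a ha hb => by simp only [mem_Icc] at ha hb; omega)

theorem classData_near_split (hn : 1 ≤ n) (hi : 1 ≤ i) (hin : i ≤ n)
    (hj₁ : 2 * i - 1 ≤ j) (hj₂ : j ≤ 2 * i) :
    Lmis (2 * n + 1) (classData n i z) j ≤ 1 / 9 ∧
      fcount (classData n i z) 1 (Icc 1 j) < fcount (classData n i z) (-1) (Icc 1 j) ∧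
      fcount (classData n i z) (-1) (Icc (j + 1) (2 * n + 1))
        < fcount (classData n i z) 1 (Icc (j + 1) (2 * n + 1)) := by
  have hmis := fcount_classData_misclassified_le (n := n) (z := z) hj₁ hj₂
  have hneg : 4 * n ^ 2 ≤ fcount (classData n i z) (-1) (Icc 1 j) :=
    le_fcount_classData_neg (by simp only [mem_Icc]; omega)
  have hpos : 4 * n ^ 2 ≤ fcount (classData n i z) 1 (Icc (j + 1) (2 * n + 1)) :=
    le_fcount_classData_pos (by simp only [mem_Icc]; omega)
  have hsq : n * n < 4 * n ^ 2 := by nlinarith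
  refine ⟨?_, by omega, by omega⟩
  rw [Lmis_eq_div, card_classData, div_le_iff₀ (by positivity)]
  calc _ ≤ ((n * n : ℕ) : ℝ) :=
        Nat.cast_le.mpr ((add_le_add (min_le_right _ _) (min_le_left _ _)).trans hmis)
    _ = 1 / 9 * ((9 * n ^ 2 : ℕ) : ℝ) := by push_cast; ring

theorem one_div_nine_le_Lmis_classData (hi : 1 ≤ i) (hin : i ≤ n)
    (hj : j < 2 * i - 1 ∨ 2 * i < j) : 1 / 9 ≤ Lmis (2 * n + 1) (classData n i z) j := by
  have hheavy : 4 * n ^ 2 ≤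
      min (fcount (classData n i z) (-1) (Icc 1 j)) (fcount (classData n i z) 1 (Icc 1 j)) +
      min (fcount (classData n i z) (-1) (Icc (j + 1) (2 * n + 1)))
        (fcount (classData n i z) 1 (Icc (j + 1) (2 * n + 1))) := by
    rcases hj with hj | hj
    · exact le_add_left (le_min (le_fcount_classData_neg (by simp only [mem_Icc]; omega))
        (le_fcount_classData_pos (by simp only [mem_Icc]; omega)))
    · exact le_add_right (le_min (le_fcount_classData_neg (by simp only [mem_Icc]; omega))
        (le_fcount_classData_pos (by simp only [mem_Icc]; omega)))
  have hn : 0 < n := by omega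
  rw [Lmis_eq_div, card_classData, le_div_iff₀ (by positivity)]
  calc 1 / 9 * ((9 * n ^ 2 : ℕ) : ℝ) ≤ ((4 * n ^ 2 : ℕ) : ℝ) := by push_cast; nlinarith
    _ ≤ _ := by exact_mod_cast hheavy

end classData

theorem cls_near_splits_loss_general (n : ℕ) (hn : 1 ≤ n) (i : ℕ) (hi : i ∈ Finset.Icc 1 n)
    (z : ℕ → ℕ) :
    (∀ j ∈ ({2 * i - 1, 2 * i} : Finset ℕ),
      Lmis (2 * n + 1) (classData n i z) j ≤ 1 / 9 ∧
      fcount (classData n i z) 1 (Finset.Icc 1 j)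
        < fcount (classData n i z) (-1) (Finset.Icc 1 j) ∧
      fcount (classData n i z) (-1) (Finset.Icc (j + 1) (2 * n + 1))
        < fcount (classData n i z) 1 (Finset.Icc (j + 1) (2 * n + 1))) ∧
    (Finset.Icc 0 (2 * n + 1)).inf' (Finset.nonempty_Icc.mpr (Nat.zero_le _))
        (Lmis (2 * n + 1) (classData n i z))
      = min (Lmis (2 * n + 1) (classData n i z) (2 * i - 1))
          (Lmis (2 * n + 1) (classData n i z) (2 * i)) := by
  obtain ⟨hi₁, hin⟩ := mem_Icc.mp hi
  have near (j : ℕ) (hj₁ : 2 * i - 1 ≤ j) (hj₂ : j ≤ 2 * i) :=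
    classData_near_split (z := z) hn hi₁ hin hj₁ hj₂
  refine ⟨?_, ?_⟩
  · simp only [mem_insert, mem_singleton]
    rintro j (rfl | rfl)
    exacts [near _ le_rfl (by omega), near _ (by omega) le_rfl]
  refine le_antisymm (le_min (inf'_le _ (by simp only [mem_Icc]; omega))
    (inf'_le _ (by simp only [mem_Icc]; omega))) (le_inf' _ _ fun j _ => ?_)
  by_cases hj : 2 * i - 1 ≤ j ∧ j ≤ 2 * i
  · obtain rfl | rfl : j = 2 * i - 1 ∨ j = 2 * i := by omega
    exacts [min_le_left _ _, min_le_right _ _]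
  · exact (min_le_left _ _).trans ((near _ le_rfl (by omega)).1.trans
      (one_div_nine_le_Lmis_classData hi₁ hin (by omega)))

/-- In the classification lower-bound construction, each split `j ∈ {2i−1, 2i}` has
misclassification loss at most `1/9`, the left majority label is `−1` and the right majority
label is `+1`; consequently the optimum over all splits `0 ≤ j ≤ N` is attained at `2i−1`
or `2i`. -/
theorem cls_near_splits_loss (n : ℕ) (hn : 1 ≤ n) (i : ℕ) (hi : i ∈ Finset.Icc 1 n)
    (z : ℕ → ℕ) (hz : ∀ k, z k = 0 ∨ z k = 1) :
    (∀ j ∈ ({2 * i - 1, 2 * i} : Finset ℕ),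
      Lmis (2 * n + 1) (classData n i z) j ≤ 1 / 9 ∧
      fcount (classData n i z) 1 (Finset.Icc 1 j)
        < fcount (classData n i z) (-1) (Finset.Icc 1 j) ∧
      fcount (classData n i z) (-1) (Finset.Icc (j + 1) (2 * n + 1))
        < fcount (classData n i z) 1 (Finset.Icc (j + 1) (2 * n + 1))) ∧
    (Finset.Icc 0 (2 * n + 1)).inf' (Finset.nonempty_Icc.mpr (Nat.zero_le _))
        (Lmis (2 * n + 1) (classData n i z))
      = min (Lmis (2 * n + 1) (classData n i z) (2 * i - 1))
          (Lmis (2 * n + 1) (classData n i z) (2 * i)) :=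
  cls_near_splits_loss_general n hn i hi z
end
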